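/- There is no epimorphism from the pro-2 group G_l(2) = ⟨x₀, x₁, x₂, x₃ ∣ x₀⁴[x₀,x₁][x₂,x₃] = 1⟩ onto the finite group G of order 2^10 given by generators a, b, c with γ = [b,a], β = [c,a], α = [c,b] central of order 2, a² = α, b⁸ = c⁸ = 1. -/

import Mathlib

/-!
Map `G10` onto its quotient `K = G10/⟨b², c²⟩` of order 64. It has exponent 4, its Frattini
quotient is `V = 𝔽₂³` (spanned by the classes of `a, b, c`), and its commutator subgroup
`⟨α, β, γ⟩` is central and identified with `V` so that `[x, y]` is the cross product of the
classes of `x` and `y`. For the images `y₀, …, y₃` of the generators of the one-relator group,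
`y₀⁴ = 1`, so the relation says `v₀ × v₁ = v₂ × v₃` for their classes, which forces the `vᵢ`
into a plane. A nonzero linear form vanishing on that plane is a nontrivial character of `G10`
that kills the image of any homomorphism from the one-relator group, so none is surjective.
-/

namespace Stmt5

/-- The commutator `[x,y] = x⁻¹y⁻¹xy` (the convention used in the paper). -/
def pc {H : Type*} [Group H] (x y : H) : H := x⁻¹ * y⁻¹ * x * y

def a : FreeGroup (Fin 3) := .of 0
def b : FreeGroup (Fin 3) := .of 1
def c : FreeGroup (Fin 3) := .of 2

/-- Relations of the group `G` of order `2^10`: `γ = [b,a]`, `β = [c,a]`, `α = [c,b]`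
are central of order 2, `a² = α`, `b⁸ = c⁸ = 1`. -/
def rels : Set (FreeGroup (Fin 3)) :=
  { pc (pc b a) a, pc (pc b a) b, pc (pc b a) c,
    pc (pc c a) a, pc (pc c a) b, pc (pc c a) c,
    pc (pc c b) a, pc (pc c b) b, pc (pc c b) c,
    (pc b a) ^ 2, (pc c a) ^ 2, (pc c b) ^ 2,
    a ^ 2 * (pc c b)⁻¹, b ^ 8, c ^ 8 }

/-- The group `G` of order `2^10`. -/
abbrev G10 := PresentedGroup rels

def x (i : Fin 4) : FreeGroup (Fin 4) := .of i

/-- The single relation `x₀⁴[x₀,x₁][x₂,x₃] = 1` of the (pro-2) group `G_l(2)` of the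
maximal pro-2 extension of `ℚ₂(√-1)`. -/
def rel5 : Set (FreeGroup (Fin 4)) := { x 0 ^ 4 * pc (x 0) (x 1) * pc (x 2) (x 3) }

lemma map_pc {G H : Type*} [Group G] [Group H] (φ : G →* H) (u v : G) :
    φ (pc u v) = pc (φ u) (φ v) := by
  simp [pc]

lemma pc_inv {G : Type*} [Group G] (x y : G) : (pc x y)⁻¹ = pc y x := by
  simp only [pc]; group

lemma pc_mul_left_of_mem_center {G : Type*} [Group G] {z : G} (hz : z ∈ Subgroup.center G)
    (x y : G) : pc (x * z) y = pc x y := by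
  have hz' := Subgroup.mem_center_iff.1 hz
  calc pc (x * z) y = z⁻¹ * (x⁻¹ * y⁻¹ * x * (z * y)) := by simp only [pc]; group
    _ = z⁻¹ * (x⁻¹ * y⁻¹ * x * y * z) := by rw [← hz' y]; group
    _ = pc x y := by rw [hz']; simp only [pc]; group

lemma pc_mul_right_of_mem_center {G : Type*} [Group G] {z : G} (hz : z ∈ Subgroup.center G)
    (x y : G) : pc x (y * z) = pc x y := by
  rw [← pc_inv, pc_mul_left_of_mem_center hz, pc_inv]

open Matrix

/- If the common cross product is nonzero, it is orthogonal to all four vectors; if it is zero,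
both pairs are parallel and the four vectors lie in a plane. -/
lemma exists_ne_zero_dotProduct_eq_zero_of_cross_eq :
    ∀ v₀ v₁ v₂ v₃ : Fin 3 → ZMod 2, v₀ ⨯₃ v₁ = v₂ ⨯₃ v₃ →
      ∃ l ≠ 0, l ⬝ᵥ v₀ = 0 ∧ l ⬝ᵥ v₁ = 0 ∧ l ⬝ᵥ v₂ = 0 ∧ l ⬝ᵥ v₃ = 0 := by
  decide

def twice (z : ZMod 2) : ZMod 4 := 2 * z.val

def mod2 : ZMod 4 →+* ZMod 2 := ZMod.castHom (by norm_num) (ZMod 2)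

lemma twice_add : ∀ u v : ZMod 2, twice (u + v) = twice u + twice v := by decide

lemma mod2_twice : ∀ u : ZMod 2, mod2 (twice u) = 0 := by decide

/- The quotient of `G10` by `⟨b², c²⟩`, of order 64: `⟨i, j, k, s, t⟩` stands for
`a^i b^j c^k β^s γ^t`, where `α = a²` is `⟨2, 0, 0, 0, 0⟩`. -/
structure K where
  i : ZMod 4
  j : ZMod 2
  k : ZMod 2
  s : ZMod 2
  t : ZMod 2
deriving DecidableEq, Fintype

namespace K

instance : Mul K := ⟨fun x y => ⟨x.i + y.i + twice (x.k * y.j), x.j + y.j, x.k + y.k,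
    x.s + y.s + x.k * mod2 y.i, x.t + y.t + x.j * mod2 y.i⟩⟩

instance : One K := ⟨⟨0, 0, 0, 0, 0⟩⟩

instance : Inv K := ⟨fun x => ⟨-x.i + twice (x.k * x.j), -x.j, -x.k,
    -x.s + x.k * mod2 x.i, -x.t + x.j * mod2 x.i⟩⟩

lemma mul_def (x y : K) : x * y = ⟨x.i + y.i + twice (x.k * y.j), x.j + y.j, x.k + y.k,
    x.s + y.s + x.k * mod2 y.i, x.t + y.t + x.j * mod2 y.i⟩ := rfl

instance : Group K where
  mul_assoc x y z := by
    simp only [mul_def, mk.injEq, add_mul, mul_add, twice_add, map_add, mod2_twice]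
    refine ⟨by ring, by ring, by ring, by ring, by ring⟩
  one_mul := by decide
  mul_one := by decide
  inv_mul_cancel := by decide

def cls (x : K) : Fin 3 → ZMod 2 := ![mod2 x.i, x.j, x.k]

def rep (v : Fin 3 → ZMod 2) : K := ⟨(v 0).val, v 1, v 2, 0, 0⟩

def gen (n : Fin 3) : K := rep (Pi.single n 1)

def central (u : Fin 3 → ZMod 2) : K := ⟨twice (u 0), 0, 0, u 1, u 2⟩

lemma cls_mul (x y : K) : cls (x * y) = cls x + cls y := by
  funext n
  fin_cases n <;> simp [cls, mul_def, mod2_twice]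

lemma cls_rep : ∀ v, cls (rep v) = v := by decide

lemma central_mem_center (u : Fin 3 → ZMod 2) : central u ∈ Subgroup.center K := by
  rw [Subgroup.mem_center_iff]
  revert u
  decide

lemma exists_eq_rep_mul_central : ∀ x : K, ∃ u, x = rep (cls x) * central u := by decide

lemma pc_rep_rep : ∀ v w, pc (rep v) (rep w) = central (v ⨯₃ w) := by decide

lemma pc_eq_central_cross (x y : K) : pc x y = central (cls x ⨯₃ cls y) := by
  obtain ⟨u, hx⟩ := exists_eq_rep_mul_central x
  obtain ⟨w, hy⟩ := exists_eq_rep_mul_central y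
  calc pc x y = pc (rep (cls x) * central u) (rep (cls y) * central w) := by rw [← hx, ← hy]
    _ = central (cls x ⨯₃ cls y) := by
      rw [pc_mul_left_of_mem_center (central_mem_center u),
        pc_mul_right_of_mem_center (central_mem_center w), pc_rep_rep]

lemma central_mul_central_eq_one_iff : ∀ u w, central u * central w = 1 ↔ u = w := by decide

lemma pow_four_eq_one : ∀ x : K, x ^ 4 = 1 := by decide

def character (l : Fin 3 → ZMod 2) : K →* Multiplicative (ZMod 2) :=
  MonoidHom.mk' (fun x => .ofAdd (l ⬝ᵥ cls x)) fun x y => by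
    rw [cls_mul, dotProduct_add]; rfl

lemma character_gen (l : Fin 3 → ZMod 2) (n : Fin 3) : character l (gen n) = .ofAdd (l n) := by
  simp [character, gen, cls_rep]

lemma exists_character_eq_one_of_rel (y : Fin 4 → K)
    (hy : y 0 ^ 4 * pc (y 0) (y 1) * pc (y 2) (y 3) = 1) :
    ∃ l ≠ 0, ∀ n, character l (y n) = 1 := by
  rw [pow_four_eq_one, one_mul, pc_eq_central_cross, pc_eq_central_cross,
    central_mul_central_eq_one_iff] at hy
  obtain ⟨l, hl, h₀, h₁, h₂, h₃⟩ := exists_ne_zero_dotProduct_eq_zero_of_cross_eq _ _ _ _ hy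
  refine ⟨l, hl, fun n => ?_⟩
  fin_cases n <;> simp [character, *]

end K

lemma lift_gen_eq_one_of_mem_rels : ∀ r ∈ rels, FreeGroup.lift K.gen r = 1 := by
  simp only [rels, Set.forall_mem_insert, Set.mem_singleton_iff, forall_eq, pc, a, b, c,
    map_mul, map_inv, map_pow, FreeGroup.lift_apply_of]
  decide

def toK : G10 →* K := PresentedGroup.toGroup lift_gen_eq_one_of_mem_rels

lemma character_toK_of (l : Fin 3 → ZMod 2) (n : Fin 3) :
    K.character l (toK (.of n)) = .ofAdd (l n) := by
  rw [toK, PresentedGroup.toGroup.of, K.character_gen]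

lemma map_rel5 {H : Type*} [Group H] (φ : PresentedGroup rel5 →* H) :
    φ (.of 0) ^ 4 * pc (φ (.of 0)) (φ (.of 1)) * pc (φ (.of 2)) (φ (.of 3)) = 1 := by
  have h := congrArg φ (PresentedGroup.one_of_mem (rels := rel5) rfl)
  simp only [map_mul, map_pow, map_pc, map_one] at h
  exact h

/-- There is no epimorphism from the one-relator group
`⟨x₀,x₁,x₂,x₃ ∣ x₀⁴[x₀,x₁][x₂,x₃] = 1⟩` (the presentation of the pro-2 Galois group of
`ℚ₂(√−1)`) onto the group `G` of order `2^10` above. -/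
theorem stmt_5 : ¬ ∃ f : PresentedGroup rel5 →* G10, Function.Surjective f := by
  rintro ⟨f, hf⟩
  obtain ⟨l, hl, hly⟩ :=
    K.exists_character_eq_one_of_rel (fun n => toK (f (.of n))) (map_rel5 (toK.comp f))
  have h : (K.character l).comp toK = 1 :=
    (MonoidHom.cancel_right hf).1 (PresentedGroup.ext hly)
  refine hl (funext fun n => ?_)
  have hn := DFunLike.congr_fun h (.of n)
  rwa [MonoidHom.comp_apply, character_toK_of, MonoidHom.one_apply, ofAdd_eq_one] at hn

end Stmt5
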